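/- There exists a constant c > 0 such that for every integer n ≥ 2, every deterministic online sorting strategy s for array size n, and every integer 1 ≤ i ≤ n, the following holds: if x is an input of n i.i.d. uniform samples from [0,1] and j is chosen uniformly at random from {1,...,n−1}, independently of x, then Pr[|A(j+1) − A(j)| ≥ 1/(4i)] ≥ c·i/n, where A = A(s,x) is the final array produced by the strategy. -/

import Mathlib

open MeasureTheory
open scoped ENNReal

/-- The distribution of `n` i.i.d. uniform samples from `[0,1]`. -/
noncomputable def uniformCube (n : ℕ) : Measure (Fin n → ℝ) :=
  Measure.pi fun _ => (volume : Measure ℝ).restrict (Set.Icc 0 1)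

/-- A deterministic online sorting strategy for array size `n`: upon arrival of the
`(k+1)`-st item, it is placed into cell `place x k`, which depends only on the first
`k+1` items and is distinct from all previously used cells. -/
structure OnlineStrategy (n : ℕ) where
  place : (Fin n → ℝ) → Fin n → Fin n
  online : ∀ x y : Fin n → ℝ, ∀ k : Fin n,
    (∀ i : Fin n, i ≤ k → x i = y i) → place x k = place y k
  inj : ∀ x : Fin n → ℝ, Function.Injective (place x)
  meas : ∀ k : Fin n, Measurable fun x => place x k

/-- The final array produced by the strategy (cells indexed `0,…,n-1`):
cell `j` holds the item inserted at the unique time `k` with `place x k = j`. -/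
noncomputable def strategyArr {n : ℕ} (S : OnlineStrategy n) (x : Fin n → ℝ) (j : ℕ) : ℝ :=
  if h : j < n then
    haveI : Nonempty (Fin n) := ⟨⟨j, h⟩⟩
    x (Function.invFun (S.place x) ⟨j, h⟩)
  else 0

/-- The cost: the sum of absolute differences between adjacent cells. -/
noncomputable def strategyCost {n : ℕ} (S : OnlineStrategy n) (x : Fin n → ℝ) : ℝ :=
  ∑ j ∈ Finset.range (n - 1), |strategyArr S x (j + 1) - strategyArr S x j|

/-- The time (0-indexed, in `{0,…,n-1}`) at which cell `j` is filled, i.e. the unique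
`k` with `place x k = j`. (Cell `j` out of range gets the junk value `0`.) -/
noncomputable def fillTime {n : ℕ} (S : OnlineStrategy n) (x : Fin n → ℝ) (j : ℕ) : ℕ :=
  if h : j < n then
    haveI : Nonempty (Fin n) := ⟨⟨j, h⟩⟩
    Fin.val (Function.invFun (S.place x) ⟨j, h⟩)
  else 0

/-- The uniform distribution on `Fin m`. -/
noncomputable def uniformFin (m : ℕ) : MeasureTheory.Measure (Fin m) :=
  (m : ℝ≥0∞)⁻¹ • MeasureTheory.Measure.count

/-!
Write `δ = 1/(4i)`. If the cells filled at times `k < t` are adjacent and hold values closer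
than `δ`, then at time `t` the new item landed within `δ` of an item sitting next to a cell that
was still empty. Given the first `t` items there are at most `2(n - t)` such items, so this has
probability at most `4(n - t)δ`. The cells filled during the last `L = ⌊i/8⌋` steps meet at least
`L/2` adjacent pairs; each of them has a gap `≥ δ` unless its later-filled cell was filled by such
a close arrival, and one arrival accounts for at most two pairs. Hence the expected number of
gaps `≥ δ` is at least `L/4`. For `i < 8` the last item alone, compared with one designated
neighbour of its (forced) cell, gives an expected number `≥ 1/2`. Dividing by the `n - 1`
choices of `j` gives the bound.
-/

open scoped Classical
open Finset Function

namespace MeasureTheory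

theorem Measure.pi_setOf_mem_le {ι : Type*} [Fintype ι] [DecidableEq ι] {X : ι → Type*}
    [∀ i, MeasurableSpace (X i)] (μ : ∀ i, Measure (X i)) [∀ i, IsProbabilityMeasure (μ i)]
    (t : ι) {U : (∀ i, X i) → Set (X t)} (hU : ∀ x y, U (update x t y) = U x)
    (hE : MeasurableSet {x | x t ∈ U x}) {ε : ℝ≥0∞} (hε : ∀ x, μ t (U x) ≤ ε) :
    Measure.pi μ {x | x t ∈ U x} ≤ ε := by
  calc Measure.pi μ {x | x t ∈ U x}
      = ∫⁻ x, {x | x t ∈ U x}.indicator 1 x ∂Measure.pi μ := (lintegral_indicator_one hE).symm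
    _ ≤ ∫⁻ _, ε ∂Measure.pi μ := by
      refine lintegral_le_of_lmarginal_le {t} (measurable_one.indicator hE) measurable_const
        fun x => ?_
      simp only [lmarginal_singleton, lintegral_const, measure_univ, mul_one]
      calc ∫⁻ y, {x | x t ∈ U x}.indicator 1 (update x t y) ∂μ t
          = ∫⁻ y, (update x t ⁻¹' {x | x t ∈ U x}).indicator 1 y ∂μ t := rfl
        _ = μ t (update x t ⁻¹' {x | x t ∈ U x}) :=
            lintegral_indicator_one (measurable_update x hE)
        _ = μ t (U x) := by congr 1; ext y; simp [hU]
        _ ≤ ε := hε x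
    _ = ε := by simp

theorem lintegral_card_filter_mem {α ι : Type*} [MeasurableSpace α] (μ : Measure α)
    (s : Finset ι) {E : ι → Set α} (hE : ∀ i, MeasurableSet (E i)) :
    ∫⁻ x, (#(s.filter (x ∈ E ·)) : ℝ≥0∞) ∂μ = ∑ i ∈ s, μ (E i) := by
  have hcard : ∀ x, (#(s.filter (x ∈ E ·)) : ℝ≥0∞) = ∑ i ∈ s, (E i).indicator 1 x := by
    intro x; rw [natCast_card_filter]; simp [Set.indicator_apply]
  simp_rw [hcard]
  rw [lintegral_finsetSum _ fun i _ => measurable_one.indicator (hE i)]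
  simp [lintegral_indicator_one (hE _)]

theorem measurable_card_filter_mem {α ι : Type*} [MeasurableSpace α] (s : Finset ι)
    {E : ι → Set α} (hE : ∀ i, MeasurableSet (E i)) :
    Measurable fun x => (#(s.filter (x ∈ E ·)) : ℝ≥0∞) := by
  simp_rw [natCast_card_filter]
  exact measurable_sum _ fun i _ => Measurable.ite (hE i) measurable_const measurable_const

theorem le_sum_measure_of_le_card {α ι κ : Type*} [MeasurableSpace α] (μ : Measure α)
    [IsProbabilityMeasure μ] {a p q : ℕ} (s : Finset ι) (s' : Finset κ) {E : ι → Set α}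
    {F : κ → Set α} (hE : ∀ i, MeasurableSet (E i)) (hF : ∀ k, MeasurableSet (F k))
    (h : ∀ x, a ≤ p * #(s.filter (x ∈ E ·)) + q * #(s'.filter (x ∈ F ·))) :
    (a : ℝ≥0∞) ≤ p * ∑ i ∈ s, μ (E i) + q * ∑ k ∈ s', μ (F k) := by
  calc (a : ℝ≥0∞) = ∫⁻ _, (a : ℝ≥0∞) ∂μ := by simp
    _ ≤ ∫⁻ x, ((p : ℝ≥0∞) * #(s.filter (x ∈ E ·)) + q * #(s'.filter (x ∈ F ·))) ∂μ :=
      lintegral_mono fun x => by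
        have := (Nat.cast_le (α := ℝ≥0∞)).mpr (h x)
        push_cast at this
        exact this
    _ = p * ∑ i ∈ s, μ (E i) + q * ∑ k ∈ s', μ (F k) := by
      rw [lintegral_add_left ((measurable_card_filter_mem s hE).const_mul _),
        lintegral_const_mul _ (measurable_card_filter_mem s hE),
        lintegral_const_mul _ (measurable_card_filter_mem s' hF),
        lintegral_card_filter_mem μ s hE, lintegral_card_filter_mem μ s' hF]

theorem Measure.prod_uniformFin_setOf {α : Type*} [MeasurableSpace α] (μ : Measure α)
    [SFinite μ] (m : ℕ) {E : Fin m → Set α} (hE : ∀ j, MeasurableSet (E j)) :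
    (μ.prod (uniformFin m)) {p | p.1 ∈ E p.2} = (m : ℝ≥0∞)⁻¹ * ∑ j, μ (E j) := by
  have hs : MeasurableSet {p : α × Fin m | p.1 ∈ E p.2} :=
    measurableSet_setOfPred.mpr
      (measurable_from_prod_countable_left fun j => measurableSet_setOfPred.mp (hE j))
  have : SFinite (uniformFin m) := by unfold uniformFin; infer_instance
  rw [Measure.prod_apply_symm hs, uniformFin, lintegral_smul_measure, lintegral_count,
    tsum_fintype, smul_eq_mul]
  rfl

end MeasureTheory

theorem ENNReal.le_two_mul_of_le_add_half {a b : ℝ≥0∞} (ha : a ≠ ∞) (h : a ≤ b + a / 2) :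
    a ≤ 2 * b := by
  have hhalf : a / 2 ≤ b := by
    rw [← ENNReal.sub_half ha]; exact tsub_le_iff_right.mpr h
  calc a = 2 * (a / 2) := (ENNReal.mul_div_cancel two_ne_zero ENNReal.ofNat_ne_top).symm
    _ ≤ 2 * b := by gcongr

instance : IsProbabilityMeasure ((volume : Measure ℝ).restrict (Set.Icc 0 1)) :=
  ⟨by simp⟩

instance (n : ℕ) : IsProbabilityMeasure (uniformCube n) := by
  unfold uniformCube; infer_instance

namespace OnlineStrategy

variable {n : ℕ}

section Placements

def filledBefore (σ : Fin n → Fin n) (t : Fin n) : Finset (Fin n) := (Iio t).image σ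

noncomputable def nearTimes (R : Fin n → Fin n → Prop) (σ : Fin n → Fin n) (t : Fin n) :
    Finset (Fin n) :=
  (Iio t).filter fun k => ∃ e ∉ filledBefore σ t, R (σ k) e

variable {R : Fin n → Fin n → Prop} {σ τ : Fin n → Fin n} {t : Fin n}

theorem card_nearTimes_le {d : ℕ} (hσ : Injective σ) (hR : ∀ e, #(univ.filter (R · e)) ≤ d) :
    #(nearTimes R σ t) ≤ d * (n - t) := by
  have hsub : nearTimes R σ t ⊆
      (filledBefore σ t)ᶜ.biUnion fun e => univ.filter fun k => R (σ k) e := by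
    intro k hk
    obtain ⟨-, e, he, hR⟩ := mem_filter.mp hk
    exact mem_biUnion.mpr ⟨e, mem_compl.mpr he, mem_filter.mpr ⟨mem_univ k, hR⟩⟩
  have hfib : ∀ e ∈ (filledBefore σ t)ᶜ, #(univ.filter fun k => R (σ k) e) ≤ d := fun e _ =>
    (card_le_card_of_injOn σ (fun k hk => by simpa using hk) hσ.injOn).trans (hR e)
  have hempty : #(filledBefore σ t)ᶜ = n - t := by
    rw [card_compl, filledBefore, card_image_of_injective _ hσ, Fin.card_Iio, Fintype.card_fin]
  calc #(nearTimes R σ t) ≤ #(filledBefore σ t)ᶜ * d :=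
        (card_le_card hsub).trans (card_biUnion_le_card_mul _ _ d hfib)
    _ = d * (n - t) := by rw [hempty, mul_comm]

theorem mem_nearTimes_of_lt (hσ : Injective σ) {k : Fin n} (hkt : k < t) (hR : R (σ k) (σ t)) :
    k ∈ nearTimes R σ t :=
  mem_filter.mpr ⟨mem_Iio.mpr hkt, σ t, by simp [filledBefore, hσ.eq_iff], hR⟩

theorem nearTimes_congr (h : ∀ k < t, σ k = τ k) : nearTimes R σ t = nearTimes R τ t := by
  have hfilled : filledBefore σ t = filledBefore τ t :=
    image_congr fun k hk => h k (mem_Iio.mp hk)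
  refine filter_congr fun k hk => ?_
  rw [hfilled, h k (mem_Iio.mp hk)]

end Placements

/-- One designated neighbour per cell: at the last step it leaves a single interval of length `2δ`
to avoid, instead of two. -/
def IsPartner (c e : Fin n) : Prop := (c : ℕ) + 1 = e ∨ ((e : ℕ) = 0 ∧ (c : ℕ) = 1)

theorem IsPartner.adj {c e : Fin n} (h : IsPartner c e) : (SimpleGraph.pathGraph n).Adj c e := by
  rw [SimpleGraph.pathGraph_adj]; unfold IsPartner at h; omega

theorem exists_isPartner (hn : 2 ≤ n) (e : Fin n) : ∃ c, IsPartner c e := by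
  by_cases he : (e : ℕ) = 0
  · exact ⟨⟨1, by omega⟩, Or.inr ⟨he, rfl⟩⟩
  · exact ⟨⟨e - 1, by omega⟩, Or.inl (by simp; omega)⟩

theorem card_filter_isPartner_le (e : Fin n) : #(univ.filter (IsPartner · e)) ≤ 1 :=
  card_le_one.mpr fun a ha b hb => by
    rw [mem_filter] at ha hb
    unfold IsPartner at ha hb
    exact Fin.ext (by omega)

theorem card_filter_pathGraph_adj_le (e : Fin n) :
    #(univ.filter ((SimpleGraph.pathGraph n).Adj · e)) ≤ 2 := by
  calc #(univ.filter ((SimpleGraph.pathGraph n).Adj · e))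
        ≤ #({(e : ℕ) + 1, (e : ℕ) - 1} : Finset ℕ) :=
        card_le_card_of_injOn Fin.val
          (fun c hc => by
            simp only [coe_filter, mem_univ, true_and, Set.mem_ofPred_eq,
              SimpleGraph.pathGraph_adj] at hc
            simp only [coe_insert, coe_singleton, Set.mem_insert_iff, Set.mem_singleton_iff]
            omega)
          Fin.val_injective.injOn
    _ ≤ 2 := card_le_two

def pairsMeeting (m : ℕ) (D : Finset ℕ) : Finset ℕ := (range m).filter fun j => j ∈ D ∨ j + 1 ∈ D

theorem card_le_two_mul_card_pairsMeeting {m : ℕ} (hm : 1 ≤ m) {D : Finset ℕ}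
    (hD : D ⊆ range (m + 1)) : #D ≤ 2 * #(pairsMeeting m D) := by
  have hcover : D ⊆ (pairsMeeting m D).biUnion fun j => {j, j + 1} := by
    intro c hc
    have hcm := mem_range.mp (hD hc)
    simp only [mem_biUnion, pairsMeeting, mem_filter, mem_range, mem_insert, mem_singleton]
    rcases Nat.lt_or_ge c m with h | h
    · exact ⟨c, ⟨h, Or.inl hc⟩, Or.inl rfl⟩
    · exact ⟨m - 1, ⟨by omega, Or.inr (by rwa [show m - 1 + 1 = c by omega])⟩, Or.inr (by omega)⟩
  calc #D ≤ #(pairsMeeting m D) * 2 :=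
        (card_le_card hcover).trans (card_biUnion_le_card_mul _ _ 2 fun _ _ => card_le_two)
    _ = 2 * #(pairsMeeting m D) := mul_comm _ _

theorem card_pairsMeeting_le (m : ℕ) (D : Finset ℕ) : #(pairsMeeting m D) ≤ 2 * #D := by
  have hcover : pairsMeeting m D ⊆ D.biUnion fun c => {c, c - 1} := by
    intro j hj
    simp only [pairsMeeting, mem_filter] at hj
    simp only [mem_biUnion, mem_insert, mem_singleton]
    rcases hj.2 with h | h
    · exact ⟨j, h, Or.inl rfl⟩
    · exact ⟨j + 1, h, Or.inr (by omega)⟩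
  calc #(pairsMeeting m D) ≤ #D * 2 :=
        (card_le_card hcover).trans (card_biUnion_le_card_mul _ _ 2 fun _ _ => card_le_two)
    _ = 2 * #D := mul_comm _ _

section Strategy

variable (S : OnlineStrategy n)

noncomputable def placeEquiv (x : Fin n → ℝ) : Fin n ≃ Fin n :=
  Equiv.ofBijective (S.place x) (S.inj x).bijective_of_finite

@[simp]
theorem place_symm_placeEquiv (x : Fin n → ℝ) (c : Fin n) :
    S.place x ((S.placeEquiv x).symm c) = c :=
  (S.placeEquiv x).apply_symm_apply c

@[simp]
theorem symm_placeEquiv_place (x : Fin n → ℝ) (k : Fin n) :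
    (S.placeEquiv x).symm (S.place x k) = k :=
  (S.placeEquiv x).symm_apply_apply k

theorem strategyArr_val (x : Fin n → ℝ) (c : Fin n) :
    strategyArr S x c = x ((S.placeEquiv x).symm c) := by
  have : Nonempty (Fin n) := ⟨c⟩
  have hc := S.place_symm_placeEquiv x c
  rw [strategyArr, dif_pos c.isLt]
  exact congrArg x (S.inj x ((Function.invFun_eq ⟨_, hc⟩).trans hc.symm))

theorem measurable_comp_place {γ : Type*} [MeasurableSpace γ]
    {F : (Fin n → ℝ) → (Fin n → Fin n) → γ} (hF : ∀ σ, Measurable (F · σ)) :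
    Measurable fun x => F x (S.place x) :=
  (measurable_from_prod_countable_left (f := fun p => F p.1 p.2) hF).comp
    (measurable_id.prodMk (measurable_pi_lambda _ S.meas))

theorem measurable_strategyArr (j : ℕ) : Measurable (strategyArr S · j) := by
  refine S.measurable_comp_place (F := fun x σ => if h : j < n then
    haveI : Nonempty (Fin n) := ⟨⟨j, h⟩⟩; x (Function.invFun σ ⟨j, h⟩) else 0) fun σ => ?_
  by_cases h : j < n
  · simpa [h] using measurable_pi_apply _
  · simp [h]

def gapEvent (δ : ℝ) (j : ℕ) : Set (Fin n → ℝ) :=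
  {x | δ ≤ |strategyArr S x (j + 1) - strategyArr S x j|}

theorem measurableSet_gapEvent (δ : ℝ) (j : ℕ) : MeasurableSet (S.gapEvent δ j) :=
  measurableSet_le measurable_const
    ((S.measurable_strategyArr (j + 1)).sub (S.measurable_strategyArr j)).abs

variable {δ : ℝ}

theorem mem_gapEvent_iff {x : Fin n → ℝ} {j : ℕ} (hj : j + 1 < n) :
    x ∈ S.gapEvent δ j ↔ δ ≤ dist (x ((S.placeEquiv x).symm ⟨j + 1, hj⟩))
      (x ((S.placeEquiv x).symm ⟨j, by omega⟩)) := by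
  rw [Real.dist_eq, ← S.strategyArr_val x ⟨j + 1, hj⟩, ← S.strategyArr_val x ⟨j, by omega⟩]
  rfl

theorem exists_mem_gapEvent {x : Fin n → ℝ} {a b : Fin n}
    (hab : (SimpleGraph.pathGraph n).Adj a b)
    (hd : δ ≤ dist (x ((S.placeEquiv x).symm b)) (x ((S.placeEquiv x).symm a))) :
    ∃ j ∈ range (n - 1), x ∈ S.gapEvent δ j := by
  rcases SimpleGraph.pathGraph_adj.mp hab with h | h
  · rw [show b = ⟨a + 1, by omega⟩ from Fin.ext h.symm] at hd
    exact ⟨a, mem_range.mpr (by omega), (S.mem_gapEvent_iff _).mpr hd⟩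
  · rw [show a = ⟨b + 1, by omega⟩ from Fin.ext h.symm] at hd
    exact ⟨b, mem_range.mpr (by omega), (S.mem_gapEvent_iff _).mpr (by rwa [dist_comm])⟩

def nearEvent (R : Fin n → Fin n → Prop) (δ : ℝ) (t : Fin n) : Set (Fin n → ℝ) :=
  {x | ∃ k ∈ nearTimes R (S.place x) t, dist (x t) (x k) < δ}

variable {R : Fin n → Fin n → Prop}

theorem measurableSet_nearEvent (t : Fin n) : MeasurableSet (S.nearEvent R δ t) := by
  refine measurableSet_setOfPred.mpr (S.measurable_comp_place
    (F := fun x σ => ∃ k ∈ nearTimes R σ t, dist (x t) (x k) < δ) fun σ => ?_)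
  have hopen : IsOpen {x : Fin n → ℝ | ∃ k ∈ nearTimes R σ t, dist (x t) (x k) < δ} := by
    have : {x : Fin n → ℝ | ∃ k ∈ nearTimes R σ t, dist (x t) (x k) < δ} =
        ⋃ k ∈ nearTimes R σ t, {x | dist (x t) (x k) < δ} := by ext; simp
    rw [this]
    exact isOpen_biUnion fun k _ =>
      isOpen_lt ((continuous_apply t).dist (continuous_apply k)) continuous_const
  exact measurableSet_setOfPred.mp hopen.measurableSet

theorem uniformCube_nearEvent_le {d : ℕ} (hR : ∀ e, #(univ.filter (R · e)) ≤ d) (t : Fin n) :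
    uniformCube n (S.nearEvent R δ t) ≤ (d * (n - t) : ℕ) * ENNReal.ofReal (2 * δ) := by
  set U : (Fin n → ℝ) → Set ℝ := fun x => ⋃ k ∈ nearTimes R (S.place x) t, Metric.ball (x k) δ
  have hU : S.nearEvent R δ t = {x | x t ∈ U x} := by
    ext x; simp [nearEvent, U, Metric.mem_ball]
  have hupdate : ∀ x y, U (update x t y) = U x := fun x y => by
    have hplace : ∀ k < t, S.place (update x t y) k = S.place x k := fun k hk =>
      S.online _ _ k fun i hi => update_of_ne (hi.trans_lt hk).ne _ _
    simp only [U, nearTimes_congr hplace]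
    refine Set.iUnion₂_congr fun k hk => ?_
    rw [update_of_ne (mem_Iio.mp (mem_filter.mp hk).1).ne]
  rw [hU]
  refine Measure.pi_setOf_mem_le _ t hupdate (hU ▸ S.measurableSet_nearEvent t) fun x => ?_
  calc (volume.restrict (Set.Icc 0 1)) (U x) ≤ volume (U x) := Measure.restrict_le_self _
    _ ≤ ∑ k ∈ nearTimes R (S.place x) t, volume (Metric.ball (x k) δ) :=
      measure_biUnion_finset_le _ _
    _ = #(nearTimes R (S.place x) t) * ENNReal.ofReal (2 * δ) := by
      simp [Real.volume_ball]
    _ ≤ (d * (n - t) : ℕ) * ENNReal.ofReal (2 * δ) := by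
      gcongr
      exact card_nearTimes_le (S.inj x) hR

theorem mem_nearEvent_of_lt {x : Fin n → ℝ} {k t : Fin n} (hkt : k < t)
    (hR : R (S.place x k) (S.place x t)) (hd : dist (x t) (x k) < δ) :
    x ∈ S.nearEvent R δ t :=
  ⟨k, mem_nearTimes_of_lt (S.inj x) hkt hR, hd⟩

theorem mem_nearEvent_max (G : SimpleGraph (Fin n)) {x : Fin n → ℝ} {a b : Fin n}
    (hab : G.Adj a b)
    (hd : dist (x ((S.placeEquiv x).symm b)) (x ((S.placeEquiv x).symm a)) < δ) :
    x ∈ S.nearEvent G.Adj δ (max ((S.placeEquiv x).symm a) ((S.placeEquiv x).symm b)) := by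
  rcases ((S.placeEquiv x).symm.injective.ne hab.ne).lt_or_gt with h | h
  · rw [max_eq_right h.le]
    exact S.mem_nearEvent_of_lt h (by rwa [place_symm_placeEquiv, place_symm_placeEquiv]) hd
  · rw [max_eq_left h.le]
    exact S.mem_nearEvent_of_lt h (by simpa using hab.symm) (by rwa [dist_comm])

theorem sub_le_card_gapEvent_add_card_nearEvent (hn : 2 ≤ n) (x : Fin n → ℝ) (s : Fin n) :
    n - s ≤ 2 * #((range (n - 1)).filter (x ∈ S.gapEvent δ ·)) +
      4 * #((Ici s).filter (x ∈ S.nearEvent (SimpleGraph.pathGraph n).Adj δ ·)) := by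
  set τ := (S.placeEquiv x).symm
  set bad := (Ici s).filter (x ∈ S.nearEvent (SimpleGraph.pathGraph n).Adj δ ·)
  set cells : Finset (Fin n) → Finset ℕ := fun T => T.image fun t => (S.place x t : ℕ)
  have hlate : #(cells (Ici s)) = n - s :=
    (card_image_of_injective _ (Fin.val_injective.comp (S.inj x))).trans (Fin.card_Ici s)
  have hpairs : #(cells (Ici s)) ≤ 2 * #(pairsMeeting (n - 1) (cells (Ici s))) :=
    card_le_two_mul_card_pairsMeeting (by omega) fun c hc => by
      obtain ⟨t, -, rfl⟩ := mem_image.mp hc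
      exact mem_range.mpr (by omega)
  have hcell : ∀ c : Fin n, ∀ t ∈ Ici s, (S.place x t : ℕ) = c → s ≤ τ c :=
    fun c t ht hval => by rw [← Fin.ext hval, symm_placeEquiv_place]; exact mem_Ici.mp ht
  have hcover : pairsMeeting (n - 1) (cells (Ici s)) ⊆
      (range (n - 1)).filter (x ∈ S.gapEvent δ ·) ∪ pairsMeeting (n - 1) (cells bad) := by
    intro j hj
    obtain ⟨hjr, hjC⟩ := mem_filter.mp hj
    have hj1 : j + 1 < n := by rw [mem_range] at hjr; omega
    by_cases hgap : x ∈ S.gapEvent δ j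
    · exact mem_union_left _ (mem_filter.mpr ⟨hjr, hgap⟩)
    refine mem_union_right _ (mem_filter.mpr ⟨hjr, ?_⟩)
    set a : Fin n := ⟨j, by omega⟩
    set b : Fin n := ⟨j + 1, hj1⟩
    have hab : (SimpleGraph.pathGraph n).Adj a b := SimpleGraph.pathGraph_adj.mpr (Or.inl rfl)
    have hnear := S.mem_nearEvent_max _ hab (not_le.mp ((S.mem_gapEvent_iff hj1).not.mp hgap))
    have hst : s ≤ max (τ a) (τ b) := by
      rcases hjC with h | h <;> obtain ⟨t, ht, hval⟩ := mem_image.mp h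
      exacts [le_max_of_le_left (hcell a t ht hval), le_max_of_le_right (hcell b t ht hval)]
    have hbad : max (τ a) (τ b) ∈ bad := mem_filter.mpr ⟨mem_Ici.mpr hst, hnear⟩
    rcases max_choice (τ a) (τ b) with h | h <;> rw [h] at hbad
    · exact Or.inl (mem_image.mpr ⟨_, hbad, congrArg Fin.val (S.place_symm_placeEquiv x a)⟩)
    · exact Or.inr (mem_image.mpr ⟨_, hbad, congrArg Fin.val (S.place_symm_placeEquiv x b)⟩)
  have hunion := (card_le_card hcover).trans (card_union_le _ _)
  have hbadPairs := card_pairsMeeting_le (n - 1) (cells bad)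
  have hbadCells : #(cells bad) ≤ #bad := card_image_le
  omega

theorem one_le_card_gapEvent_add_card_nearEvent (hn : 2 ≤ n) (x : Fin n → ℝ) {t : Fin n}
    (ht : (t : ℕ) + 1 = n) :
    1 ≤ #((range (n - 1)).filter (x ∈ S.gapEvent δ ·)) +
      #(({t} : Finset (Fin n)).filter (x ∈ S.nearEvent IsPartner δ ·)) := by
  by_cases hx : x ∈ S.nearEvent IsPartner δ t
  · rw [filter_singleton, if_pos hx, card_singleton]; omega
  obtain ⟨c, hc⟩ := exists_isPartner hn (S.place x t)
  set k := (S.placeEquiv x).symm c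
  have hσk : S.place x k = c := S.place_symm_placeEquiv x c
  have hkt : k < t := by
    refine lt_of_le_of_ne (Fin.le_def.mpr (by omega)) fun hkt => hc.adj.ne ?_
    rw [← hσk, hkt]
  have hd : δ ≤ dist (x ((S.placeEquiv x).symm (S.place x t))) (x k) := by
    rw [symm_placeEquiv_place]
    exact not_lt.mp fun h => hx (S.mem_nearEvent_of_lt hkt (by rwa [hσk]) h)
  obtain ⟨j, hj, hgap⟩ := S.exists_mem_gapEvent hc.adj hd
  have : 0 < #((range (n - 1)).filter (x ∈ S.gapEvent δ ·)) :=
    card_pos.mpr ⟨j, mem_filter.mpr ⟨hj, hgap⟩⟩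
  omega

theorem one_le_two_mul_sum_gapEvent (hn : 2 ≤ n) (hδ : 4 * δ ≤ 1) :
    1 ≤ 2 * ∑ j ∈ range (n - 1), uniformCube n (S.gapEvent δ j) := by
  obtain ⟨t, ht⟩ : ∃ t : Fin n, (t : ℕ) + 1 = n := ⟨⟨n - 1, by omega⟩, by simp; omega⟩
  have hcount := le_sum_measure_of_le_card (uniformCube n) (a := 1) (p := 1) (q := 1)
    (range (n - 1)) {t} (S.measurableSet_gapEvent δ) (S.measurableSet_nearEvent (δ := δ))
    fun x => by
      simpa using S.one_le_card_gapEvent_add_card_nearEvent hn x ht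
  have hlast : uniformCube n (S.nearEvent IsPartner δ t) ≤ 1 / 2 := by
    refine (S.uniformCube_nearEvent_le card_filter_isPartner_le t).trans ?_
    rw [show 1 * (n - (t : ℕ)) = 1 by omega, Nat.cast_one, one_mul,
      ← ENNReal.ofReal_one, ← ENNReal.ofReal_ofNat 2, ← ENNReal.ofReal_div_of_pos two_pos]
    exact ENNReal.ofReal_le_ofReal (by linarith)
  refine ENNReal.le_two_mul_of_le_add_half ENNReal.one_ne_top ?_
  simp only [Nat.cast_one, one_mul, sum_singleton] at hcount
  exact hcount.trans (by gcongr)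

theorem sub_le_four_mul_sum_gapEvent (hn : 2 ≤ n) (s : Fin n)
    (hδ : 32 * ((n - s : ℕ) : ℝ) * δ ≤ 1) :
    ((n - s : ℕ) : ℝ≥0∞) ≤ 4 * ∑ j ∈ range (n - 1), uniformCube n (S.gapEvent δ j) := by
  set L := n - (s : ℕ)
  have hcount := le_sum_measure_of_le_card (uniformCube n) (a := L) (p := 2) (q := 4)
    (range (n - 1)) (Ici s) (S.measurableSet_gapEvent δ) (S.measurableSet_nearEvent (δ := δ))
    (S.sub_le_card_gapEvent_add_card_nearEvent hn · s)
  simp only [Nat.cast_ofNat] at hcount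
  have hnear : ∀ t ∈ Ici s, uniformCube n (S.nearEvent (SimpleGraph.pathGraph n).Adj δ t) ≤
      ENNReal.ofReal 8⁻¹ := fun t ht => by
    refine (S.uniformCube_nearEvent_le card_filter_pathGraph_adj_le t).trans ?_
    rw [← ENNReal.ofReal_natCast, ← ENNReal.ofReal_mul (by positivity)]
    refine ENNReal.ofReal_le_ofReal ?_
    have hle : ((2 * (n - t) : ℕ) : ℝ) ≤ 2 * L := by
      have := mem_Ici.mp ht
      exact_mod_cast (by omega : 2 * (n - t) ≤ 2 * L)
    rcases le_total 0 δ with h | h <;> nlinarith [(by positivity : (0 : ℝ) ≤ (2 * (n - t) : ℕ))]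
  have hbad : 4 * ∑ t ∈ Ici s, uniformCube n (S.nearEvent (SimpleGraph.pathGraph n).Adj δ t) ≤
      L / 2 :=
    calc 4 * ∑ t ∈ Ici s, uniformCube n (S.nearEvent (SimpleGraph.pathGraph n).Adj δ t)
        ≤ 4 * ∑ t ∈ Ici s, ENNReal.ofReal 8⁻¹ := by gcongr with t ht; exact hnear t ht
      _ = ENNReal.ofReal (L / 2) := by
        rw [sum_const, Fin.card_Ici, nsmul_eq_mul, ← ENNReal.ofReal_natCast,
          ← ENNReal.ofReal_mul (by positivity), ← ENNReal.ofReal_ofNat 4,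
          ← ENNReal.ofReal_mul (by positivity)]
        ring_nf
        rfl
      _ = L / 2 := by
        rw [ENNReal.ofReal_div_of_pos two_pos, ENNReal.ofReal_natCast, ENNReal.ofReal_ofNat]
  calc (L : ℝ≥0∞) ≤ 2 * (2 * ∑ j ∈ range (n - 1), uniformCube n (S.gapEvent δ j)) :=
        ENNReal.le_two_mul_of_le_add_half (ENNReal.natCast_ne_top L) (hcount.trans (by gcongr))
    _ = 4 * ∑ j ∈ range (n - 1), uniformCube n (S.gapEvent δ j) := by ring

theorem natCast_le_sixty_four_mul_sum_gapEvent (hn : 2 ≤ n) {i : ℕ} (hi : 1 ≤ i) (hin : i ≤ n) :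
    (i : ℝ≥0∞) ≤ 64 * ∑ j ∈ range (n - 1), uniformCube n (S.gapEvent (1 / (4 * i)) j) := by
  have hi1 : (1 : ℝ) ≤ i := by exact_mod_cast hi
  rcases lt_or_ge i 8 with hi8 | hi8
  · have h := S.one_le_two_mul_sum_gapEvent hn (δ := 1 / (4 * i))
      (by rw [mul_one_div, div_le_one (by linarith)]; linarith)
    calc (i : ℝ≥0∞) ≤ 32 * 1 := by norm_cast; omega
      _ ≤ 32 * (2 * _) := by gcongr
      _ = _ := by ring
  · have hL : n - (n - i / 8) = i / 8 := by omega
    have hδ : 32 * ((i / 8 : ℕ) : ℝ) * (1 / (4 * i)) ≤ 1 := by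
      have : ((i / 8 : ℕ) : ℝ) * 8 ≤ i := by exact_mod_cast Nat.div_mul_le_self i 8
      rw [mul_one_div, div_le_one (by linarith)]
      linarith
    have h := S.sub_le_four_mul_sum_gapEvent hn ⟨n - i / 8, by omega⟩ (by rwa [Fin.val_mk, hL])
    rw [Fin.val_mk, hL] at h
    calc (i : ℝ≥0∞) ≤ 16 * (i / 8 : ℕ) := by norm_cast; omega
      _ ≤ 16 * (4 * _) := by gcongr
      _ = _ := by ring

end Strategy

end OnlineStrategy

/-- For a uniformly random adjacent pair `(j, j+1)` and a random input: with
probability `Ω(i/n)`, the final contents of cells `j` and `j+1` differ by at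
least `1/(4i)`. -/
theorem adjacent_pair_gap_prob :
    ∃ c : ℝ, 0 < c ∧ ∀ n : ℕ, 2 ≤ n → ∀ S : OnlineStrategy n, ∀ i : ℕ, 1 ≤ i → i ≤ n →
      ENNReal.ofReal (c * (i : ℝ) / (n : ℝ)) ≤
        ((uniformCube n).prod (uniformFin (n - 1)))
          {p | 1 / (4 * (i : ℝ)) ≤
            |strategyArr S p.1 ((p.2 : ℕ) + 1) - strategyArr S p.1 (p.2 : ℕ)|} := by
  refine ⟨1 / 64, by norm_num, fun n hn S i hi hin => ?_⟩
  set G := ∑ j ∈ range (n - 1), uniformCube n (S.gapEvent (1 / (4 * i)) j)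
  have hprod := Measure.prod_uniformFin_setOf (uniformCube n) (n - 1)
    (E := fun j => S.gapEvent (1 / (4 * i)) j) fun j => S.measurableSet_gapEvent _ _
  rw [Fin.sum_univ_eq_sum_range (fun j => uniformCube n (S.gapEvent (1 / (4 * i)) j))] at hprod
  refine le_of_le_of_eq ?_ hprod.symm
  have hn_pos : (0 : ℝ) < n := by exact_mod_cast (by omega : 0 < n)
  calc ENNReal.ofReal (1 / 64 * i / n) = i / (64 * n) := by
        rw [show (1 / 64 : ℝ) * i / n = i / (64 * n) by ring,
          ENNReal.ofReal_div_of_pos (by positivity), ENNReal.ofReal_mul (by norm_num),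
          ENNReal.ofReal_natCast, ENNReal.ofReal_natCast, ENNReal.ofReal_ofNat]
    _ ≤ 64 * G / (64 * n) := by gcongr; exact S.natCast_le_sixty_four_mul_sum_gapEvent hn hi hin
    _ = G / n := ENNReal.mul_div_mul_left _ _ (by norm_num) (by norm_num)
    _ ≤ G / (n - 1 : ℕ) := ENNReal.div_le_div_left (by norm_cast; omega) _
    _ = ((n - 1 : ℕ) : ℝ≥0∞)⁻¹ * G := ENNReal.div_eq_inv_mul
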